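/- arXiv:2411.05973 — 2 statements merged into one kernel-verified Lean document; each statement's English description precedes it below -/
import Mathlib

section
/- Let E = {(T_1,S_3),(T_2,S_3),(T_3,S_1),(T_3,S_4),(T_3,S_5),(T_4,S_1),(T_4,S_2),(T_4,S_5),(T_5,S_2),(T_5,S_3),(T_5,S_6),(T_6,S_3),(T_6,S_4),(T_6,S_6),(T_7,S_5),(T_8,S_5)} and let E' be the same set with (T_7,S_5),(T_8,S_5) replaced by (T_7,S_6),(T_8,S_6). Then there is no signed permutation matrix σ ∈ G such that {(σ·T, σ·S) : (T,S) ∈ E} = E'; i.e. the edge assignments E and E' are non-isomorphic under G. -/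
open Matrix

/-- `τ = (2√2+1)/7`. -/
noncomputable def tau : ℝ := (2 * Real.sqrt 2 + 1) / 7

/-- The eight cube points `T_1, …, T_8` (indexed by `Fin 8`, so `T 0 = T_1` etc.). -/
noncomputable def T : Fin 8 → Fin 3 → ℝ :=
  ![tau • ![1, 1, 1], tau • ![-1, 1, 1], tau • ![-1, -1, 1], tau • ![1, -1, 1],
    tau • ![1, 1, -1], tau • ![-1, 1, -1], tau • ![-1, -1, -1], tau • ![1, -1, -1]]

/-- The six octahedron points `S_1, …, S_6` (indexed by `Fin 6`, so `S 0 = S_1` etc.). -/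
def S : Fin 6 → Fin 3 → ℝ :=
  ![![0, 0, 1], ![1, 0, 0], ![0, 1, 0], ![-1, 0, 0], ![0, -1, 0], ![0, 0, -1]]

/-- A `3×3` signed permutation matrix (element of the octahedral group `G`). -/
def IsSignedPerm (M : Matrix (Fin 3) (Fin 3) ℝ) : Prop :=
  Mᵀ * M = 1 ∧ (∀ i, ∃! j, M i j ≠ 0) ∧ (∀ j, ∃! i, M i j ≠ 0) ∧
    ∀ i j, M i j ≠ 0 → M i j = 1 ∨ M i j = -1

/-- The edge assignment `E`. -/
noncomputable def E : Set ((Fin 3 → ℝ) × (Fin 3 → ℝ)) :=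
  {(T 0, S 2), (T 1, S 2), (T 2, S 0), (T 2, S 3), (T 2, S 4), (T 3, S 0),
   (T 3, S 1), (T 3, S 4), (T 4, S 1), (T 4, S 2), (T 4, S 5), (T 5, S 2),
   (T 5, S 3), (T 5, S 5), (T 6, S 4), (T 7, S 4)}

/-- The edge assignment `E'`, which is `E` with `(T_7,S_5),(T_8,S_5)` replaced by
`(T_7,S_6),(T_8,S_6)`. -/
noncomputable def E' : Set ((Fin 3 → ℝ) × (Fin 3 → ℝ)) :=
  {(T 0, S 2), (T 1, S 2), (T 2, S 0), (T 2, S 3), (T 2, S 4), (T 3, S 0),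
   (T 3, S 1), (T 3, S 4), (T 4, S 1), (T 4, S 2), (T 4, S 5), (T 5, S 2),
   (T 5, S 3), (T 5, S 5), (T 6, S 5), (T 7, S 5)}


/-!
The argument is a degree count. Linear isometries are injective and commute with `x ↦ -x`.
Injectivity means a map carrying `E` into `E'` cannot lower the number of cube points
paired with an octahedron point. In `E` the antipodal points `S_3` and `S_5` each have four
partners, whereas in `E'` only `S_3` and `S_6` have more than two, and these are not antipodal.
-/

open Set Function

section Partners

variable {α β γ δ : Type*}

theorem encard_preimage_mk_le_of_image_subset {f : α → γ} (hf : Injective f) {g : β → δ}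
    {R : Set (α × β)} {R' : Set (γ × δ)} (h : Prod.map f g '' R ⊆ R') (b : β) :
    ((·, b) ⁻¹' R).encard ≤ ((·, g b) ⁻¹' R').encard := by
  rw [← hf.encard_image]
  refine encard_le_encard ?_
  rintro _ ⟨a, ha, rfl⟩
  exact h ⟨(a, b), ha, rfl⟩

theorem preimage_mk_image_prodMap {f : α → γ} {g : β → δ} (hg : Injective g)
    (R : Set (α × β)) (b : β) :
    (·, g b) ⁻¹' (Prod.map f g '' R) = f '' ((·, b) ⁻¹' R) := by
  ext c
  simp [hg.eq_iff]

theorem preimage_mk_image_prodMap_of_notMem_range {f : α → γ} {g : β → δ} {d : δ}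
    (hd : d ∉ range g) (R : Set (α × β)) :
    (·, d) ⁻¹' (Prod.map f g '' R) = ∅ := by
  ext c
  simp only [mem_preimage, mem_image, Prod.exists, Prod.map, Prod.mk.injEq, mem_empty_iff_false,
    iff_false, not_exists, not_and]
  rintro a b - - rfl
  exact hd ⟨b, rfl⟩

theorem encard_preimage_mk_finset [Fintype α] [DecidableEq α] [DecidableEq β]
    (P : Finset (α × β)) (b : β) :
    ((·, b) ⁻¹' (P : Set (α × β))).encard = {a | (a, b) ∈ P}.toFinset.card := by
  rw [← encard_coe_eq_coe_finsetCard]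
  simp
  rfl

end Partners

theorem T_injective : Injective T := by
  have htau : tau ≠ -tau := by
    unfold tau
    intro h
    linarith [show 0 < (2 * √2 + 1) / 7 by positivity]
  intro i j
  fin_cases i <;> fin_cases j <;> simp [T, funext_iff, Fin.forall_fin_succ, htau, htau.symm]

theorem S_injective : Injective S := by
  intro i j
  fin_cases i <;> fin_cases j <;> simp [S, funext_iff, Fin.forall_fin_succ] <;> norm_num

theorem neg_S_two : -S 2 = S 4 := by
  ext i; fin_cases i <;> simp [S]

theorem neg_S_five : -S 5 = S 0 := by
  ext i; fin_cases i <;> simp [S]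

def edgeIdx : Finset (Fin 8 × Fin 6) :=
  {(0, 2), (1, 2), (2, 0), (2, 3), (2, 4), (3, 0), (3, 1), (3, 4), (4, 1), (4, 2), (4, 5),
   (5, 2), (5, 3), (5, 5), (6, 4), (7, 4)}

def edgeIdx' : Finset (Fin 8 × Fin 6) :=
  {(0, 2), (1, 2), (2, 0), (2, 3), (2, 4), (3, 0), (3, 1), (3, 4), (4, 1), (4, 2), (4, 5),
   (5, 2), (5, 3), (5, 5), (6, 5), (7, 5)}

theorem E_eq_image : E = Prod.map T S '' edgeIdx := by
  simp [E, edgeIdx, image_insert_eq]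

theorem E'_eq_image : E' = Prod.map T S '' edgeIdx' := by
  simp [E', edgeIdx', image_insert_eq]

theorem encard_preimage_mk_S_image (P : Finset (Fin 8 × Fin 6)) (k : Fin 6) :
    ((·, S k) ⁻¹' (Prod.map T S '' P)).encard = {i | (i, k) ∈ P}.toFinset.card := by
  rw [preimage_mk_image_prodMap S_injective, T_injective.encard_image, encard_preimage_mk_finset]

theorem eq_S_two_or_S_five_of_three_le_encard {x : Fin 3 → ℝ}
    (hx : 3 ≤ ((·, x) ⁻¹' E').encard) : x = S 2 ∨ x = S 5 := by
  rw [E'_eq_image] at hx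
  by_cases hxS : x ∈ range S
  · obtain ⟨k, rfl⟩ := hxS
    rw [encard_preimage_mk_S_image] at hx
    replace hx := Nat.ofNat_le_cast.1 hx
    have hk : k = 2 ∨ k = 5 := by revert k; decide
    rcases hk with rfl | rfl <;> simp
  · simp [preimage_mk_image_prodMap_of_notMem_range hxS] at hx

theorem not_neg_eq_S_two_or_S_five {u : Fin 3 → ℝ} (hu : u = S 2 ∨ u = S 5) :
    ¬ (-u = S 2 ∨ -u = S 5) := by
  rcases hu with rfl | rfl <;> simp [neg_S_two, neg_S_five, S_injective.eq_iff]

theorem image_E_ne_E' {f : (Fin 3 → ℝ) → Fin 3 → ℝ} (hf : Injective f)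
    (hf_neg : ∀ x, f (-x) = -f x) : Prod.map f f '' E ≠ E' := by
  intro h
  have hdeg : ∀ k, 3 ≤ {i | (i, k) ∈ edgeIdx}.toFinset.card → f (S k) = S 2 ∨ f (S k) = S 5 :=
    fun k hk ↦ eq_S_two_or_S_five_of_three_le_encard <|
      calc (3 : ℕ∞) ≤ ((·, S k) ⁻¹' E).encard := by
            rw [E_eq_image, encard_preimage_mk_S_image]; exact_mod_cast hk
        _ ≤ _ := encard_preimage_mk_le_of_image_subset hf h.subset (S k)
  refine not_neg_eq_S_two_or_S_five (hdeg 2 (by decide)) ?_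
  rw [← hf_neg, neg_S_two]
  exact hdeg 4 (by decide)

/-- There is no signed permutation matrix `σ ∈ G` carrying the edge assignment `E`
onto `E'` componentwise: `E` and `E'` are non-isomorphic under `G`. -/
theorem stmt_4 :
    ¬ ∃ σ : Matrix (Fin 3) (Fin 3) ℝ, IsSignedPerm σ ∧
      (fun p : (Fin 3 → ℝ) × (Fin 3 → ℝ) => (σ.mulVec p.1, σ.mulVec p.2)) '' E = E' := by
  rintro ⟨σ, hσ, h⟩
  have hinj : Injective σ.mulVec :=
    mulVec_injective_of_isUnit <| (isUnit_iff_isUnit_det σ).2 (isUnit_det_of_left_inverse hσ.1)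
  exact image_E_ne_E' hinj (fun x ↦ mulVec_neg x σ) h
end

section
/- For a subset A of the 12 cube edges, let Γ_A be the simple graph on the 14 vertices {T_1,…,T_8,S_1,…,S_6} whose edges are: all 12 octahedron edges, all 24 pairs {T_i,S_j} with ⟨T_i,S_j⟩ > 0, and the cube edges in A. Then among the graphs Γ_A for which every vertex of Γ_A has even degree (equivalently, every point T_i lies on an odd number of edges of A), there are exactly 6 graph-isomorphism classes; one class (that of the full set of cube edges) corresponds to the monohedral tiling B𝒪, and the remaining 5 classes correspond to the dihedral f-tilings whose prototiles are the Möbius triangle and an isosceles triangle derived from B𝒪 by a-edge assignments. -/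
open Matrix

attribute [local instance] Classical.propDecidable

/-- The 14 vertices: `pt 0,…,pt 7` are the cube points `T_1,…,T_8`; `pt 8,…,pt 13`
are the octahedron points `S_1,…,S_6`. -/
noncomputable def pt : Fin 14 → Fin 3 → ℝ :=
  ![tau • ![1, 1, 1], tau • ![-1, 1, 1], tau • ![-1, -1, 1], tau • ![1, -1, 1],
    tau • ![1, 1, -1], tau • ![-1, 1, -1], tau • ![-1, -1, -1], tau • ![1, -1, -1],
    ![0, 0, 1], ![1, 0, 0], ![0, 1, 0], ![-1, 0, 0], ![0, -1, 0], ![0, 0, -1]]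

/-- The 12 cube edges: pairs `{T_i, T_k}` differing in exactly one coordinate. -/
noncomputable def cubeEdges : Finset (Sym2 (Fin 14)) :=
  Finset.univ.filter fun e => ∃ u v : Fin 14, u.val < 8 ∧ v.val < 8 ∧ e = s(u, v) ∧
    (Finset.univ.filter fun c : Fin 3 => pt u c ≠ pt v c).card = 1

/-- The 12 octahedron edges: pairs `{S_j, S_l}` with `⟨S_j, S_l⟩ = 0`. -/
noncomputable def octEdges : Finset (Sym2 (Fin 14)) :=
  Finset.univ.filter fun e => ∃ u v : Fin 14, 8 ≤ u.val ∧ 8 ≤ v.val ∧ e = s(u, v) ∧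
    pt u ⬝ᵥ pt v = 0

/-- The 24 pairs `{T_i, S_j}` with `⟨T_i, S_j⟩ > 0`, as unordered pairs. -/
noncomputable def candEdges : Finset (Sym2 (Fin 14)) :=
  (Finset.univ.filter fun p : Fin 14 × Fin 14 =>
    p.1.val < 8 ∧ 8 ≤ p.2.val ∧ 0 < pt p.1 ⬝ᵥ pt p.2).image fun p => s(p.1, p.2)

/-- The simple graph `Γ_A` on the 14 vertices whose edges are the 12 octahedron
edges, the 24 pairs `{T_i, S_j}` with `⟨T_i, S_j⟩ > 0`, and the cube edges in `A`. -/
noncomputable def Γ (A : Finset (Sym2 (Fin 14))) : SimpleGraph (Fin 14) :=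
  SimpleGraph.fromEdgeSet ↑(octEdges ∪ candEdges ∪ A)

/-- `A` is a subset of the cube edges for which every vertex of `Γ_A` has even
degree. -/
noncomputable def Good (A : Finset (Sym2 (Fin 14))) : Prop :=
  A ⊆ cubeEdges ∧ ∀ v : Fin 14, Even ((Γ A).degree v)

/-- Graph isomorphism between `Γ_A` and `Γ_{A'}`. -/
noncomputable def isoRel (A A' : {A : Finset (Sym2 (Fin 14)) // Good A}) : Prop :=
  Nonempty (Γ A.1 ≃g Γ A'.1)

set_option maxRecDepth 40000
set_option maxHeartbeats 4000000

def ztbl : Fin 14 → Fin 3 → ℤ :=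
  ![![1,1,1], ![-1,1,1], ![-1,-1,1], ![1,-1,1], ![1,1,-1], ![-1,1,-1], ![-1,-1,-1], ![1,-1,-1],
    ![0,0,1], ![1,0,0], ![0,1,0], ![-1,0,0], ![0,-1,0], ![0,0,-1]]


lemma hT : ∀ u : Fin 14, u.val < 8 → ∀ c : Fin 3, pt u c = tau * ((ztbl u c : ℤ) : ℝ) := by
  intro u hu c
  match u, c with
  | 0, 0 => rw [show pt 0 0 = tau * 1 from rfl, show ztbl 0 0 = 1 from rfl]; norm_num
  | 0, 1 => rw [show pt 0 1 = tau * 1 from rfl, show ztbl 0 1 = 1 from rfl]; norm_num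
  | 0, 2 => rw [show pt 0 2 = tau * 1 from rfl, show ztbl 0 2 = 1 from rfl]; norm_num
  | 1, 0 => rw [show pt 1 0 = tau * (-1) from rfl, show ztbl 1 0 = (-1) from rfl]; norm_num
  | 1, 1 => rw [show pt 1 1 = tau * 1 from rfl, show ztbl 1 1 = 1 from rfl]; norm_num
  | 1, 2 => rw [show pt 1 2 = tau * 1 from rfl, show ztbl 1 2 = 1 from rfl]; norm_num
  | 2, 0 => rw [show pt 2 0 = tau * (-1) from rfl, show ztbl 2 0 = (-1) from rfl]; norm_num
  | 2, 1 => rw [show pt 2 1 = tau * (-1) from rfl, show ztbl 2 1 = (-1) from rfl]; norm_num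
  | 2, 2 => rw [show pt 2 2 = tau * 1 from rfl, show ztbl 2 2 = 1 from rfl]; norm_num
  | 3, 0 => rw [show pt 3 0 = tau * 1 from rfl, show ztbl 3 0 = 1 from rfl]; norm_num
  | 3, 1 => rw [show pt 3 1 = tau * (-1) from rfl, show ztbl 3 1 = (-1) from rfl]; norm_num
  | 3, 2 => rw [show pt 3 2 = tau * 1 from rfl, show ztbl 3 2 = 1 from rfl]; norm_num
  | 4, 0 => rw [show pt 4 0 = tau * 1 from rfl, show ztbl 4 0 = 1 from rfl]; norm_num
  | 4, 1 => rw [show pt 4 1 = tau * 1 from rfl, show ztbl 4 1 = 1 from rfl]; norm_num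
  | 4, 2 => rw [show pt 4 2 = tau * (-1) from rfl, show ztbl 4 2 = (-1) from rfl]; norm_num
  | 5, 0 => rw [show pt 5 0 = tau * (-1) from rfl, show ztbl 5 0 = (-1) from rfl]; norm_num
  | 5, 1 => rw [show pt 5 1 = tau * 1 from rfl, show ztbl 5 1 = 1 from rfl]; norm_num
  | 5, 2 => rw [show pt 5 2 = tau * (-1) from rfl, show ztbl 5 2 = (-1) from rfl]; norm_num
  | 6, 0 => rw [show pt 6 0 = tau * (-1) from rfl, show ztbl 6 0 = (-1) from rfl]; norm_num
  | 6, 1 => rw [show pt 6 1 = tau * (-1) from rfl, show ztbl 6 1 = (-1) from rfl]; norm_num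
  | 6, 2 => rw [show pt 6 2 = tau * (-1) from rfl, show ztbl 6 2 = (-1) from rfl]; norm_num
  | 7, 0 => rw [show pt 7 0 = tau * 1 from rfl, show ztbl 7 0 = 1 from rfl]; norm_num
  | 7, 1 => rw [show pt 7 1 = tau * (-1) from rfl, show ztbl 7 1 = (-1) from rfl]; norm_num
  | 7, 2 => rw [show pt 7 2 = tau * (-1) from rfl, show ztbl 7 2 = (-1) from rfl]; norm_num
  | 8, c => exact absurd hu (by decide)
  | 9, c => exact absurd hu (by decide)
  | 10, c => exact absurd hu (by decide)
  | 11, c => exact absurd hu (by decide)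
  | 12, c => exact absurd hu (by decide)
  | 13, c => exact absurd hu (by decide)

lemma hS : ∀ u : Fin 14, 8 ≤ u.val → ∀ c : Fin 3, pt u c = ((ztbl u c : ℤ) : ℝ) := by
  intro u hu c
  match u, c with
  | 8, 0 => rw [show pt 8 0 = 0 from rfl, show ztbl 8 0 = 0 from rfl]; norm_num
  | 8, 1 => rw [show pt 8 1 = 0 from rfl, show ztbl 8 1 = 0 from rfl]; norm_num
  | 8, 2 => rw [show pt 8 2 = 1 from rfl, show ztbl 8 2 = 1 from rfl]; norm_num
  | 9, 0 => rw [show pt 9 0 = 1 from rfl, show ztbl 9 0 = 1 from rfl]; norm_num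
  | 9, 1 => rw [show pt 9 1 = 0 from rfl, show ztbl 9 1 = 0 from rfl]; norm_num
  | 9, 2 => rw [show pt 9 2 = 0 from rfl, show ztbl 9 2 = 0 from rfl]; norm_num
  | 10, 0 => rw [show pt 10 0 = 0 from rfl, show ztbl 10 0 = 0 from rfl]; norm_num
  | 10, 1 => rw [show pt 10 1 = 1 from rfl, show ztbl 10 1 = 1 from rfl]; norm_num
  | 10, 2 => rw [show pt 10 2 = 0 from rfl, show ztbl 10 2 = 0 from rfl]; norm_num
  | 11, 0 => rw [show pt 11 0 = (-1) from rfl, show ztbl 11 0 = (-1) from rfl]; norm_num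
  | 11, 1 => rw [show pt 11 1 = 0 from rfl, show ztbl 11 1 = 0 from rfl]; norm_num
  | 11, 2 => rw [show pt 11 2 = 0 from rfl, show ztbl 11 2 = 0 from rfl]; norm_num
  | 12, 0 => rw [show pt 12 0 = 0 from rfl, show ztbl 12 0 = 0 from rfl]; norm_num
  | 12, 1 => rw [show pt 12 1 = (-1) from rfl, show ztbl 12 1 = (-1) from rfl]; norm_num
  | 12, 2 => rw [show pt 12 2 = 0 from rfl, show ztbl 12 2 = 0 from rfl]; norm_num
  | 13, 0 => rw [show pt 13 0 = 0 from rfl, show ztbl 13 0 = 0 from rfl]; norm_num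
  | 13, 1 => rw [show pt 13 1 = 0 from rfl, show ztbl 13 1 = 0 from rfl]; norm_num
  | 13, 2 => rw [show pt 13 2 = (-1) from rfl, show ztbl 13 2 = (-1) from rfl]; norm_num
  | 0, c => exact absurd hu (by decide)
  | 1, c => exact absurd hu (by decide)
  | 2, c => exact absurd hu (by decide)
  | 3, c => exact absurd hu (by decide)
  | 4, c => exact absurd hu (by decide)
  | 5, c => exact absurd hu (by decide)
  | 6, c => exact absurd hu (by decide)
  | 7, c => exact absurd hu (by decide)


def Ofin : Finset (Sym2 (Fin 14)) := {s(8,9), s(8,10), s(8,11), s(8,12), s(9,10), s(9,12), s(9,13), s(10,11), s(10,13), s(11,12), s(11,13), s(12,13)}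
def Cfin : Finset (Sym2 (Fin 14)) := {s(0,8), s(0,9), s(0,10), s(1,8), s(1,10), s(1,11), s(2,8), s(2,11), s(2,12), s(3,8), s(3,9), s(3,12), s(4,9), s(4,10), s(4,13), s(5,10), s(5,11), s(5,13), s(6,11), s(6,12), s(6,13), s(7,9), s(7,12), s(7,13)}
def ea : Fin 12 → Fin 14 := ![0,0,0,1,1,2,2,3,4,4,5,6]
def eb : Fin 12 → Fin 14 := ![1,3,4,2,5,3,6,7,5,7,6,7]
def E12 (i : Fin 12) : Sym2 (Fin 14) := s(ea i, eb i)
def mset (s : Finset (Fin 12)) : Finset (Sym2 (Fin 14)) := s.image E12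

def zdot (u v : Fin 14) : ℤ := ztbl u 0 * ztbl v 0 + ztbl u 1 * ztbl v 1 + ztbl u 2 * ztbl v 2

lemma tau_pos : 0 < tau := by
  have h : 0 < Real.sqrt 2 := Real.sqrt_pos.mpr (by norm_num)
  unfold tau; positivity

lemma bridge_oct (u v : Fin 14) (hu : 8 ≤ u.val) (hv : 8 ≤ v.val) :
    pt u ⬝ᵥ pt v = 0 ↔ zdot u v = 0 := by
  have h : pt u ⬝ᵥ pt v = ((zdot u v : ℤ) : ℝ) := by
    simp only [dotProduct, Fin.sum_univ_three, hS u hu, hS v hv, zdot]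
    push_cast; ring
  rw [h, Int.cast_eq_zero]

lemma bridge_cand (u v : Fin 14) (hu : u.val < 8) (hv : 8 ≤ v.val) :
    (0 < pt u ⬝ᵥ pt v) ↔ 0 < zdot u v := by
  have h : pt u ⬝ᵥ pt v = tau * ((zdot u v : ℤ) : ℝ) := by
    simp only [dotProduct, Fin.sum_univ_three, hT u hu, hS v hv, zdot]
    push_cast; ring
  rw [h, mul_pos_iff_of_pos_left tau_pos, Int.cast_pos]

lemma bridge_cube (u v : Fin 14) (hu : u.val < 8) (hv : v.val < 8) (c : Fin 3) :
    pt u c ≠ pt v c ↔ ztbl u c ≠ ztbl v c := by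
  rw [hT u hu c, hT v hv c]
  constructor
  · intro h hz; exact h (by rw [hz])
  · intro h hz; exact h (Int.cast_injective (mul_left_cancel₀ (ne_of_gt tau_pos) hz))

lemma oct_eq : octEdges = Ofin := by
  ext e
  simp only [octEdges, Finset.mem_filter, Finset.mem_univ, true_and]
  constructor
  · rintro ⟨u, v, hu, hv, rfl, hd⟩
    exact (show ∀ u v : Fin 14, 8 ≤ u.val → 8 ≤ v.val → zdot u v = 0 → s(u,v) ∈ Ofin by decide)
      u v hu hv ((bridge_oct u v hu hv).1 hd)
  · intro he
    obtain ⟨u,v,hu,hv,heq,hz⟩ :=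
      (show ∀ e ∈ Ofin, ∃ u v : Fin 14, 8 ≤ u.val ∧ 8 ≤ v.val ∧ e = s(u,v) ∧ zdot u v = 0 by decide) e he
    exact ⟨u,v,hu,hv,heq,(bridge_oct u v hu hv).2 hz⟩

lemma cand_eq : candEdges = Cfin := by
  ext e
  simp only [candEdges, Finset.mem_image, Finset.mem_filter, Finset.mem_univ, true_and]
  constructor
  · rintro ⟨⟨u,v⟩, ⟨hu, hv, hd⟩, rfl⟩
    exact (show ∀ u v : Fin 14, u.val < 8 → 8 ≤ v.val → 0 < zdot u v → s(u,v) ∈ Cfin by decide)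
      u v hu hv ((bridge_cand u v hu hv).1 hd)
  · intro he
    obtain ⟨u,v,hu,hv,heq,hz⟩ :=
      (show ∀ e ∈ Cfin, ∃ u v : Fin 14, u.val < 8 ∧ 8 ≤ v.val ∧ e = s(u,v) ∧ 0 < zdot u v by decide) e he
    exact ⟨(u,v), ⟨hu,hv,(bridge_cand u v hu hv).2 hz⟩, heq.symm⟩

lemma filter_bridge (u v : Fin 14) (hu : u.val < 8) (hv : v.val < 8) :
    (Finset.univ.filter fun c : Fin 3 => pt u c ≠ pt v c)
      = (Finset.univ.filter fun c : Fin 3 => ztbl u c ≠ ztbl v c) := by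
  ext c
  simp only [Finset.mem_filter, Finset.mem_univ, true_and]
  exact bridge_cube u v hu hv c

lemma cube_eq : cubeEdges = Finset.univ.image E12 := by
  ext e
  simp only [cubeEdges, Finset.mem_filter, Finset.mem_univ, true_and]
  constructor
  · rintro ⟨u, v, hu, hv, rfl, hcard⟩
    rw [filter_bridge u v hu hv] at hcard
    exact (show ∀ u v : Fin 14, u.val < 8 → v.val < 8 →
      ((Finset.univ.filter fun c : Fin 3 => ztbl u c ≠ ztbl v c).card = 1) →
      s(u,v) ∈ Finset.univ.image E12 by decide) u v hu hv hcard
  · intro he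
    obtain ⟨u,v,hu,hv,heq,hz⟩ :=
      (show ∀ e ∈ Finset.univ.image E12, ∃ u v : Fin 14, u.val < 8 ∧ v.val < 8 ∧ e = s(u,v) ∧
        (Finset.univ.filter fun c : Fin 3 => ztbl u c ≠ ztbl v c).card = 1 by decide) e he
    refine ⟨u,v,hu,hv,heq,?_⟩
    rw [filter_bridge u v hu hv]
    exact hz


def Bfin : Finset (Sym2 (Fin 14)) := Ofin ∪ Cfin
def baseMask : ℕ := 48553653954041974590436274628779735017265514345233339385600
def gAdj (m : ℕ) (u v : Fin 14) : Bool := ((m >>> (u.val * 14 + v.val)) &&& 1) == 1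
def patt (i : Fin 12) (u v : Fin 14) : Bool := (ea i == u && eb i == v) || (ea i == v && eb i == u)
def cubB (s : Finset (Fin 12)) (u v : Fin 14) : Bool := decide (∃ i ∈ s, patt i u v = true)
def bAdj (s : Finset (Fin 12)) (u v : Fin 14) : Bool := gAdj baseMask u v || cubB s u v
def bd : Fin 14 → ℕ := ![3,3,3,3,3,3,3,3,8,8,8,8,8,8]
def cnt (s : Finset (Fin 12)) (u : Fin 14) : ℕ := (s.filter fun i => u = ea i ∨ u = eb i).card
def idxT : Fin 14 → Fin 14 → Fin 12 :=
  ![![0,0,0,1,2,0,0,0,0,0,0,0,0,0],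
    ![0,0,3,0,0,4,0,0,0,0,0,0,0,0],
    ![0,3,0,5,0,0,6,0,0,0,0,0,0,0],
    ![1,0,5,0,0,0,0,7,0,0,0,0,0,0],
    ![2,0,0,0,0,8,0,9,0,0,0,0,0,0],
    ![0,4,0,0,8,0,10,0,0,0,0,0,0,0],
    ![0,0,6,0,0,10,0,11,0,0,0,0,0,0],
    ![0,0,0,7,9,0,11,0,0,0,0,0,0,0],
    ![0,0,0,0,0,0,0,0,0,0,0,0,0,0],
    ![0,0,0,0,0,0,0,0,0,0,0,0,0,0],
    ![0,0,0,0,0,0,0,0,0,0,0,0,0,0],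
    ![0,0,0,0,0,0,0,0,0,0,0,0,0,0],
    ![0,0,0,0,0,0,0,0,0,0,0,0,0,0],
    ![0,0,0,0,0,0,0,0,0,0,0,0,0,0]]

lemma base_mem_iff : ∀ u v : Fin 14, (s(u,v) ∈ Bfin) ↔ gAdj baseMask u v = true := by decide

lemma base_ne : ∀ u v : Fin 14, gAdj baseMask u v = true → u ≠ v := by decide

lemma patt_ne : ∀ (i : Fin 12) (u v : Fin 14), patt i u v = true → u ≠ v := by decide

lemma patt_iff (i : Fin 12) (u v : Fin 14) : E12 i = s(u,v) ↔ patt i u v = true := by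
  simp [E12, patt, Sym2.eq_iff]

lemma mem_mset_iff (s : Finset (Fin 12)) (u v : Fin 14) :
    s(u,v) ∈ mset s ↔ cubB s u v = true := by
  rw [mset, Finset.mem_image, cubB, decide_eq_true_iff]
  constructor
  · rintro ⟨i, hi, he⟩; exact ⟨i, hi, (patt_iff i u v).1 he⟩
  · rintro ⟨i, hi, he⟩; exact ⟨i, hi, (patt_iff i u v).2 he⟩

lemma AdjIff (s : Finset (Fin 12)) (u v : Fin 14) :
    (Γ (mset s)).Adj u v ↔ bAdj s u v = true := by
  rw [Γ, SimpleGraph.fromEdgeSet_adj, Finset.mem_coe, oct_eq, cand_eq]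
  rw [show Ofin ∪ Cfin = Bfin from rfl, Finset.mem_union, bAdj, Bool.or_eq_true]
  constructor
  · rintro ⟨hm | hm, hne⟩
    · exact Or.inl ((base_mem_iff u v).1 hm)
    · exact Or.inr ((mem_mset_iff s u v).1 hm)
  · rintro (hb | hb)
    · exact ⟨Or.inl ((base_mem_iff u v).2 hb), base_ne u v hb⟩
    · refine ⟨Or.inr ((mem_mset_iff s u v).2 hb), ?_⟩
      rw [cubB, decide_eq_true_iff] at hb
      obtain ⟨i, _, hp⟩ := hb
      exact patt_ne i u v hp


-- degree machinery
lemma F1 : ∀ (i : Fin 12) (v w : Fin 14), patt i v w = true → idxT v w = i := by decide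
lemma F2 : ∀ (i : Fin 12) (v w : Fin 14), patt i v w = true → (v = ea i ∨ v = eb i) := by decide
lemma F3 : ∀ (i : Fin 12) (v : Fin 14), (v = ea i ∨ v = eb i) →
    patt i v (if v = ea i then eb i else ea i) = true := by decide
lemma F4 : ∀ (i : Fin 12) (v w : Fin 14), patt i v w = true →
    (if v = ea i then eb i else ea i) = w := by decide
lemma F6 : ∀ (i : Fin 12) (v w : Fin 14), patt i v w = true → gAdj baseMask v w = false := by decide

lemma cub_card (s : Finset (Fin 12)) (v : Fin 14) :
    (Finset.univ.filter fun w => cubB s v w = true).card = cnt s v := by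
  rw [cnt]
  apply Finset.card_bij' (fun w _ => idxT v w) (fun i _ => if v = ea i then eb i else ea i)
  · intro w hw
    rw [Finset.mem_filter] at hw
    rw [cubB, decide_eq_true_iff] at hw
    obtain ⟨i, hi, hp⟩ := hw.2
    rw [F1 i v w hp]
    exact Finset.mem_filter.2 ⟨hi, F2 i v w hp⟩
  · intro i hi
    rw [Finset.mem_filter] at hi
    refine Finset.mem_filter.2 ⟨Finset.mem_univ _, ?_⟩
    rw [cubB, decide_eq_true_iff]
    exact ⟨i, hi.1, F3 i v hi.2⟩
  · intro w hw
    rw [Finset.mem_filter] at hw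
    rw [cubB, decide_eq_true_iff] at hw
    obtain ⟨i, hi, hp⟩ := hw.2
    rw [F1 i v w hp]
    exact F4 i v w hp
  · intro i hi
    rw [Finset.mem_filter] at hi
    exact F1 i v _ (F3 i v hi.2)

lemma base_cnt : ∀ v : Fin 14, (Finset.univ.filter fun w => gAdj baseMask v w = true).card = bd v := by
  decide

lemma degree_eq (s : Finset (Fin 12)) (v : Fin 14) :
    (Γ (mset s)).degree v = bd v + cnt s v := by
  have hnb : (Γ (mset s)).neighborFinset v
      = (Finset.univ.filter fun w => gAdj baseMask v w = true)
        ∪ (Finset.univ.filter fun w => cubB s v w = true) := by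
    ext w
    rw [SimpleGraph.mem_neighborFinset, AdjIff, Finset.mem_union, Finset.mem_filter,
      Finset.mem_filter, bAdj, Bool.or_eq_true]
    simp [Finset.mem_univ]
  rw [SimpleGraph.degree, hnb, Finset.card_union_of_disjoint, base_cnt, cub_card]
  rw [Finset.disjoint_left]
  intro w hw1 hw2
  rw [Finset.mem_filter] at hw1 hw2
  rw [cubB, decide_eq_true_iff] at hw2
  obtain ⟨i, _, hp⟩ := hw2.2
  rw [F6 i v w hp] at hw1
  exact Bool.noConfusion hw1.2

lemma einj : ∀ i j : Fin 12, E12 i = E12 j → i = j := by decide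

lemma sub_mset {A : Finset (Sym2 (Fin 14))} (hA : A ⊆ cubeEdges) :
    A = mset (Finset.univ.filter fun i => E12 i ∈ A) := by
  ext e
  rw [mset, Finset.mem_image]
  constructor
  · intro he
    have := hA he
    rw [cube_eq, Finset.mem_image] at this
    obtain ⟨i, _, hi⟩ := this
    exact ⟨i, Finset.mem_filter.2 ⟨Finset.mem_univ _, by rw [hi]; exact he⟩, hi⟩
  · rintro ⟨i, hi, rfl⟩
    exact (Finset.mem_filter.1 hi).2

lemma mem_E12_iff : ∀ (u : Fin 14) (i : Fin 12), u ∈ E12 i ↔ (u = ea i ∨ u = eb i) := by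
  intro u i
  rw [E12, Sym2.mem_iff]

lemma mcnt (s : Finset (Fin 12)) (u : Fin 14) :
    ((mset s).filter fun e => u ∈ e).card = cnt s u := by
  rw [mset, Finset.filter_image]
  rw [Finset.card_image_of_injective _ (fun i j => einj i j)]
  rw [cnt]
  congr 1
  apply Finset.filter_congr
  intro i _
  simp only [Function.comp_apply, mem_E12_iff]

lemma cnt_hi (s : Finset (Fin 12)) (v : Fin 14) (hv : 8 ≤ v.val) : cnt s v = 0 := by
  rw [cnt, Finset.card_eq_zero, Finset.filter_eq_empty_iff]
  intro i _
  exact (show ∀ (i : Fin 12) (v : Fin 14), 8 ≤ v.val → ¬(v = ea i ∨ v = eb i) by decide) i v hv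

lemma bd_lo : ∀ v : Fin 14, v.val < 8 → bd v = 3 := by decide
lemma bd_hi : ∀ v : Fin 14, 8 ≤ v.val → bd v = 8 := by decide

lemma bullet2 : ∀ A ⊆ cubeEdges, ((∀ v : Fin 14, Even ((Γ A).degree v)) ↔
    ∀ u : Fin 14, u.val < 8 → Odd (A.filter fun e => u ∈ e).card) := by
  intro A hA
  rw [sub_mset hA]
  set s := Finset.univ.filter fun i => E12 i ∈ A with hs
  constructor
  · intro h u hu
    have := h u
    rw [degree_eq, bd_lo u hu] at this
    rw [mcnt, Nat.odd_iff]
    rw [Nat.even_iff] at this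
    omega
  · intro h v
    rw [degree_eq]
    by_cases hv : v.val < 8
    · have := h v hv
      rw [mcnt, Nat.odd_iff] at this
      rw [bd_lo v hv, Nat.even_iff]
      omega
    · push_neg at hv
      rw [bd_hi v hv, cnt_hi s v hv]
      decide


def goodA : Fin 32 → Finset (Fin 12) := ![{0,5,8,11}, {0,5,9,10}, {0,6,7,8}, {1,3,8,11}, {1,3,9,10}, {1,4,6,9}, {2,3,7,10}, {2,4,5,11}, {2,4,6,7}, {0,1,2,3,4,11}, {0,1,2,5,7,10}, {0,1,2,6,8,9}, {0,1,2,6,10,11}, {0,3,4,5,6,9}, {0,3,4,7,8,10}, {0,3,4,7,9,11}, {0,6,7,9,10,11}, {1,3,5,6,7,8}, {1,4,5,7,8,10}, {1,4,5,7,9,11}, {1,4,6,8,10,11}, {2,3,5,6,8,9}, {2,3,5,6,10,11}, {2,3,7,8,9,11}, {2,4,5,8,9,10}, {0,1,2,3,4,5,6,7}, {0,1,2,3,4,8,9,10}, {0,1,2,5,7,8,9,11}, {0,3,4,5,6,8,10,11}, {1,3,5,6,7,9,10,11}, {2,4,6,7,8,9,10,11}, {0,1,2,3,4,5,6,7,8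,9,10,11}]
def maskA : Fin 32 → ℕ := ![48553653954041974590436274649064620519887527321812517013250,48553653954041974590436274633850956463765161756903113508610,48553653954041974590436274631315113607866200821948854847234,48553653954041974590436274649064620519887527308616766916360,48553653954041974590436274633850956463765161743707363411720,48553653954041974590436274633850414791801293905374237689608,48553653954041974590436274631315655263299552184823047063312,48553653954041974590436274649064620503357010846353583507216,48553653954041974590436274631315113591335684346489921341200,48553653954041974590436274649064620503357010833157833443098,48553653954041974590436274631315655263299552206814890182426,48553653954041974590436274633850414808331954496021247051546,48553653954041974590436274649065316917825789344058607421210,48553653954041974590436274633850414791801293918571061659394,48553653954041974590436274631315655284552435143151626831618,48553653954041974590436274656670524104735539115132776433410,48553653954041974590436274656671220519204317626033550411522,48553653954041974590436274631315113607866200843941771806472,48553653954041974590436274631315655284552435165143469917960,48553653954041974590436274656670524104735539137124619519752,48553653954041974590436274649065316939078672302387187156744,48553653954041974590436274633850414808331954509218070988560,48553653954041974590436274649065316917825789357255431358224,48553653954041974590436274656670524121266199705779785762576,48553653954041974590436274633850956485018188830419769100048,48553653954041974590436274631315113591335684368482838333210,48553653954041974590436274633850956485018188817224019035930,4855365395404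1974590436274656670524121266199727771628881690,48553653954041974590436274649065316939078672315584011126530,48553653954041974590436274656671220519204317648026467370760,48553653954041974590436274656671220540457344699550206002960,48553653954041974590436274656671220540457344721543122994970]
def clsOf : Fin 32 → Fin 6 := ![0,1,1,1,0,1,1,1,0,2,2,2,3,2,2,3,2,2,3,2,2,3,2,2,2,4,4,4,4,4,4,5]
def repIdx : Fin 6 → Fin 32 := ![0,1,9,12,25,31]
def pf : Fin 32 → Fin 14 → Fin 14 := ![
  ![0,1,2,3,4,5,6,7,8,9,10,11,12,13],
  ![0,1,2,3,4,5,6,7,8,9,10,11,12,13],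
  ![0,1,5,4,3,2,6,7,10,9,8,11,13,12],
  ![0,3,2,1,4,7,6,5,8,10,9,12,11,13],
  ![0,3,2,1,4,7,6,5,8,10,9,12,11,13],
  ![0,3,7,4,1,2,6,5,9,10,8,12,13,11],
  ![0,4,7,3,1,5,6,2,9,8,10,13,12,11],
  ![0,4,5,1,3,7,6,2,10,8,9,13,11,12],
  ![0,4,5,1,3,7,6,2,10,8,9,13,11,12],
  ![0,1,2,3,4,5,6,7,8,9,10,11,12,13],
  ![0,3,2,1,4,7,6,5,8,10,9,12,11,13],
  ![0,4,5,1,3,7,6,2,10,8,9,13,11,12],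
  ![0,1,2,3,4,5,6,7,8,9,10,11,12,13],
  ![1,2,3,0,5,6,7,4,8,10,11,12,9,13],
  ![1,5,4,0,2,6,7,3,10,8,11,13,9,12],
  ![1,0,3,2,5,4,7,6,8,11,10,9,12,13],
  ![6,7,3,2,5,4,0,1,12,11,13,9,8,10],
  ![2,3,0,1,6,7,4,5,8,11,12,9,10,13],
  ![3,0,1,2,7,4,5,6,8,12,9,10,11,13],
  ![3,7,4,0,2,6,5,1,9,8,12,13,10,11],
  ![5,6,2,1,4,7,3,0,11,10,13,12,8,9],
  ![2,1,0,3,6,5,4,7,8,12,11,10,9,13],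
  ![2,6,5,1,3,7,4,0,11,8,12,13,10,9],
  ![4,7,3,0,5,6,2,1,9,10,13,12,8,11],
  ![4,5,1,0,7,6,2,3,10,9,13,11,8,12],
  ![0,1,2,3,4,5,6,7,8,9,10,11,12,13],
  ![0,1,5,4,3,2,6,7,10,9,8,11,13,12],
  ![0,3,7,4,1,2,6,5,9,10,8,12,13,11],
  ![1,2,6,5,0,3,7,4,11,10,8,12,13,9],
  ![2,3,7,6,1,0,4,5,12,11,8,9,13,10],
  ![4,5,6,7,0,1,2,3,13,9,10,11,12,8],
  ![0,1,2,3,4,5,6,7,8,9,10,11,12,13]]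
def pg : Fin 32 → Fin 14 → Fin 14 := ![
  ![0,1,2,3,4,5,6,7,8,9,10,11,12,13],
  ![0,1,2,3,4,5,6,7,8,9,10,11,12,13],
  ![0,1,5,4,3,2,6,7,10,9,8,11,13,12],
  ![0,3,2,1,4,7,6,5,8,10,9,12,11,13],
  ![0,3,2,1,4,7,6,5,8,10,9,12,11,13],
  ![0,4,5,1,3,7,6,2,10,8,9,13,11,12],
  ![0,4,7,3,1,5,6,2,9,8,10,13,12,11],
  ![0,3,7,4,1,2,6,5,9,10,8,12,13,11],
  ![0,3,7,4,1,2,6,5,9,10,8,12,13,11],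
  ![0,1,2,3,4,5,6,7,8,9,10,11,12,13],
  ![0,3,2,1,4,7,6,5,8,10,9,12,11,13],
  ![0,3,7,4,1,2,6,5,9,10,8,12,13,11],
  ![0,1,2,3,4,5,6,7,8,9,10,11,12,13],
  ![3,0,1,2,7,4,5,6,8,12,9,10,11,13],
  ![3,0,4,7,2,1,5,6,9,12,8,10,13,11],
  ![1,0,3,2,5,4,7,6,8,11,10,9,12,13],
  ![6,7,3,2,5,4,0,1,12,11,13,9,8,10],
  ![2,3,0,1,6,7,4,5,8,11,12,9,10,13],
  ![1,2,3,0,5,6,7,4,8,10,11,12,9,13],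
  ![3,7,4,0,2,6,5,1,9,8,12,13,10,11],
  ![7,3,2,6,4,0,1,5,12,13,9,8,11,10],
  ![2,1,0,3,6,5,4,7,8,12,11,10,9,13],
  ![7,3,0,4,6,2,1,5,9,13,12,8,10,11],
  ![3,7,6,2,0,4,5,1,12,8,9,13,11,10],
  ![3,2,6,7,0,1,5,4,12,9,8,11,13,10],
  ![0,1,2,3,4,5,6,7,8,9,10,11,12,13],
  ![0,1,5,4,3,2,6,7,10,9,8,11,13,12],
  ![0,4,5,1,3,7,6,2,10,8,9,13,11,12],
  ![4,0,1,5,7,3,2,6,10,13,9,8,11,12],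
  ![5,4,0,1,6,7,3,2,10,11,13,9,8,12],
  ![4,5,6,7,0,1,2,3,13,9,10,11,12,8],
  ![0,1,2,3,4,5,6,7,8,9,10,11,12,13]]
def n10T : Fin 6 → ℕ := ![8,8,6,6,4,0]
def n24T : Fin 6 → ℕ := ![2,0,0,0,1,0]
def n26T : Fin 6 → ℕ := ![0,4,2,0,0,0]

set_option maxHeartbeats 4000000 in
lemma cnt_card : (Finset.univ.filter fun s : Finset (Fin 12) =>
    ∀ u : Fin 14, u.val < 8 → Odd (cnt s u)).card = 32 := by decide

lemma eachGood : ∀ k : Fin 32, ∀ u : Fin 14, u.val < 8 → Odd (cnt (goodA k) u) := by decide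

lemma goodA_inj : ∀ k l : Fin 32, goodA k = goodA l → k = l := by decide

lemma good_enum : ∀ s : Finset (Fin 12),
    (∀ u : Fin 14, u.val < 8 → Odd (cnt s u)) ↔ ∃ k : Fin 32, goodA k = s := by
  have himg : (Finset.univ.image goodA).card = 32 := by
    rw [Finset.card_image_of_injective _ (fun k l h => goodA_inj k l h), Finset.card_univ]
    rfl
  have hsub : Finset.univ.image goodA ⊆ (Finset.univ.filter fun s : Finset (Fin 12) =>
      ∀ u : Fin 14, u.val < 8 → Odd (cnt s u)) := by
    intro s hs
    rw [Finset.mem_image] at hs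
    obtain ⟨k, _, rfl⟩ := hs
    exact Finset.mem_filter.2 ⟨Finset.mem_univ _, eachGood k⟩
  have heq := Finset.eq_of_subset_of_card_le hsub (by rw [cnt_card, himg])
  intro s
  constructor
  · intro h
    have : s ∈ Finset.univ.image goodA := by
      rw [heq]; exact Finset.mem_filter.2 ⟨Finset.mem_univ _, h⟩
    rw [Finset.mem_image] at this
    obtain ⟨k, _, hk⟩ := this
    exact ⟨k, hk⟩
  · rintro ⟨k, rfl⟩
    exact eachGood k


lemma mset_sub (s : Finset (Fin 12)) : mset s ⊆ cubeEdges := by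
  rw [cube_eq, mset]; exact Finset.image_subset_image (Finset.subset_univ s)

lemma good_iff (A : Finset (Sym2 (Fin 14))) : Good A ↔ ∃ k : Fin 32, A = mset (goodA k) := by
  constructor
  · rintro ⟨hsub, hdeg⟩
    have h2 := (bullet2 A hsub).1 hdeg
    have hms := sub_mset hsub
    set s := Finset.univ.filter fun i => E12 i ∈ A with hsdef
    have hodd : ∀ u : Fin 14, u.val < 8 → Odd (cnt s u) := by
      intro u hu
      rw [← mcnt s u, ← hms]
      exact h2 u hu
    obtain ⟨k, hk⟩ := (good_enum s).1 hodd
    exact ⟨k, by rw [hms, hk]⟩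
  · rintro ⟨k, rfl⟩
    refine ⟨mset_sub _, (bullet2 _ (mset_sub _)).2 ?_⟩
    intro u hu
    rw [mcnt]
    exact (good_enum (goodA k)).2 ⟨k, rfl⟩ u hu

lemma adjm : ∀ (k : Fin 32) (u v : Fin 14), bAdj (goodA k) u v = gAdj (maskA k) u v := by decide

lemma perm_inv1 : ∀ (k : Fin 32) (x : Fin 14), pg k (pf k x) = x := by decide
lemma perm_inv2 : ∀ (k : Fin 32) (x : Fin 14), pf k (pg k x) = x := by decide
lemma perm_adj : ∀ (k : Fin 32) (u v : Fin 14),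
    gAdj (maskA k) (pf k u) (pf k v) = gAdj (maskA (repIdx (clsOf k))) u v := by decide

def isoK (k : Fin 32) : (Γ (mset (goodA (repIdx (clsOf k))))) ≃g (Γ (mset (goodA k))) where
  toFun := pf k
  invFun := pg k
  left_inv := perm_inv1 k
  right_inv := perm_inv2 k
  map_rel_iff' := by
    intro u v
    simp only [Equiv.coe_fn_mk]
    rw [AdjIff, AdjIff, adjm, adjm, perm_adj]


noncomputable def w3 (G : SimpleGraph (Fin 14)) (u v : Fin 14) : ℕ :=
  (Finset.univ.filter fun q : Fin 14 × Fin 14 => G.Adj u q.1 ∧ G.Adj q.1 q.2 ∧ G.Adj q.2 v).card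

noncomputable def Nc (G : SimpleGraph (Fin 14)) (c : ℕ) : ℕ :=
  (Finset.univ.filter fun v => w3 G v v = c).card

lemma w3_iso {G G' : SimpleGraph (Fin 14)} (φ : G ≃g G') (u v : Fin 14) :
    w3 G' (φ u) (φ v) = w3 G u v := by
  rw [w3, w3]
  apply Finset.card_bij' (fun q _ => (φ.symm q.1, φ.symm q.2)) (fun q _ => (φ q.1, φ q.2))
  · intro q hq
    rw [Finset.mem_filter] at hq ⊢
    obtain ⟨-, h1, h2, h3⟩ := hq
    refine ⟨Finset.mem_univ _, ?_, ?_, ?_⟩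
    · have := φ.symm.map_adj_iff.2 h1
      simpa using this
    · exact φ.symm.map_adj_iff.2 h2
    · have := φ.symm.map_adj_iff.2 h3
      simpa using this
  · intro q hq
    rw [Finset.mem_filter] at hq ⊢
    obtain ⟨-, h1, h2, h3⟩ := hq
    exact ⟨Finset.mem_univ _, φ.map_adj_iff.2 h1, φ.map_adj_iff.2 h2, φ.map_adj_iff.2 h3⟩
  · intro q _; simp
  · intro q _; simp

lemma Nc_iso {G G' : SimpleGraph (Fin 14)} (φ : G ≃g G') (c : ℕ) : Nc G' c = Nc G c := by
  rw [Nc, Nc]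
  apply Finset.card_bij' (fun v _ => φ.symm v) (fun v _ => φ v)
  · intro v hv
    rw [Finset.mem_filter] at hv ⊢
    refine ⟨Finset.mem_univ _, ?_⟩
    have := w3_iso φ.symm v v
    rw [this]; exact hv.2
  · intro v hv
    rw [Finset.mem_filter] at hv ⊢
    refine ⟨Finset.mem_univ _, ?_⟩
    have := w3_iso φ v v
    rw [this]; exact hv.2
  · intro v _; simp
  · intro v _; simp

def mw3 (m : ℕ) (v : Fin 14) : ℕ :=
  (Finset.univ.filter fun q : Fin 14 × Fin 14 =>
    (gAdj m v q.1 && gAdj m q.1 q.2 && gAdj m q.2 v) = true).card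

lemma w3_eval (k : Fin 32) (v : Fin 14) :
    w3 (Γ (mset (goodA k))) v v = mw3 (maskA k) v := by
  rw [w3, mw3]
  congr 1
  apply Finset.filter_congr
  intro q _
  rw [AdjIff, AdjIff, AdjIff, adjm, adjm, adjm]
  simp [Bool.and_eq_true, and_assoc]

lemma Nc_eval (k : Fin 32) (c : ℕ) :
    Nc (Γ (mset (goodA k))) c = (Finset.univ.filter fun v => mw3 (maskA k) v = c).card := by
  rw [Nc]
  congr 1
  apply Finset.filter_congr
  intro v _
  rw [w3_eval]

lemma nc10 : ∀ i : Fin 6, (Finset.univ.filter fun v => mw3 (maskA (repIdx i)) v = 10).card = n10T i := by decide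
lemma nc24 : ∀ i : Fin 6, (Finset.univ.filter fun v => mw3 (maskA (repIdx i)) v = 24).card = n24T i := by decide
lemma nc26 : ∀ i : Fin 6, (Finset.univ.filter fun v => mw3 (maskA (repIdx i)) v = 26).card = n26T i := by decide

lemma sep_table : ∀ i j : Fin 6, n10T i = n10T j → n24T i = n24T j → n26T i = n26T j → i = j := by decide

lemma sep (i j : Fin 6)
    (φ : (Γ (mset (goodA (repIdx i)))) ≃g (Γ (mset (goodA (repIdx j))))) : i = j := by
  apply sep_table
  · rw [← nc10 i, ← nc10 j, ← Nc_eval, ← Nc_eval]; exact (Nc_iso φ 10).symm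
  · rw [← nc24 i, ← nc24 j, ← Nc_eval, ← Nc_eval]; exact (Nc_iso φ 24).symm
  · rw [← nc26 i, ← nc26 j, ← Nc_eval, ← Nc_eval]; exact (Nc_iso φ 26).symm


lemma mset_inj {s t : Finset (Fin 12)} (h : mset s = mset t) : s = t :=
  Finset.image_injective (fun i j hij => einj i j hij) h

noncomputable def kOf (A : {A : Finset (Sym2 (Fin 14)) // Good A}) : Fin 32 :=
  ((good_iff A.1).1 A.2).choose

lemma kOf_spec (A : {A : Finset (Sym2 (Fin 14)) // Good A}) : A.1 = mset (goodA (kOf A)) :=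
  ((good_iff A.1).1 A.2).choose_spec

noncomputable def cls (A : {A : Finset (Sym2 (Fin 14)) // Good A}) : Fin 6 := clsOf (kOf A)

lemma keyIso (A : {A : Finset (Sym2 (Fin 14)) // Good A}) :
    Nonempty ((Γ (mset (goodA (repIdx (cls A))))) ≃g (Γ A.1)) := by
  rw [kOf_spec A]
  exact ⟨isoK (kOf A)⟩

lemma hsound : ∀ A B, isoRel A B → cls A = cls B := by
  intro A B h
  obtain ⟨φ⟩ := h
  obtain ⟨ψA⟩ := keyIso A
  obtain ⟨ψB⟩ := keyIso B
  exact sep (cls A) (cls B) (ψA.trans (φ.trans ψB.symm))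

lemma good_rep (i : Fin 6) : Good (mset (goodA (repIdx i))) :=
  (good_iff _).2 ⟨repIdx i, rfl⟩

noncomputable def repSub (i : Fin 6) : {A : Finset (Sym2 (Fin 14)) // Good A} :=
  ⟨mset (goodA (repIdx i)), good_rep i⟩

lemma clsOf_repIdx : ∀ i : Fin 6, clsOf (repIdx i) = i := by decide

lemma cls_rep (i : Fin 6) : cls (repSub i) = i := by
  have h := kOf_spec (repSub i)
  have h2 : goodA (kOf (repSub i)) = goodA (repIdx i) := by
    exact (mset_inj (h.symm)).symm ▸ rfl
  have h3 := goodA_inj _ _ h2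
  rw [cls, h3, clsOf_repIdx]

noncomputable def quotEquiv : Quot isoRel ≃ Fin 6 where
  toFun := Quot.lift cls hsound
  invFun := fun i => Quot.mk _ (repSub i)
  left_inv := by
    apply Quot.ind
    intro A
    apply Quot.sound
    exact keyIso A
  right_inv := cls_rep


/-- Among the graphs `Γ_A` with all degrees even (equivalently, every point `T_i`
lies on an odd number of edges of `A`) there are exactly `6` graph-isomorphism
classes; the full set of cube edges satisfies the condition (its class corresponds to
the monohedral tiling `B𝒪`), and the remaining `5` classes correspond to the dihedral
f-tilings with prototiles the Möbius triangle and an isosceles triangle derived from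
`B𝒪` by `a`-edge assignments. -/
theorem stmt_18 :
    Nat.card (Quot isoRel) = 6 ∧
    (∀ A ⊆ cubeEdges, ((∀ v : Fin 14, Even ((Γ A).degree v)) ↔
      ∀ u : Fin 14, u.val < 8 → Odd (A.filter fun e => u ∈ e).card)) ∧
    Good cubeEdges := by
  refine ⟨?_, bullet2, ?_⟩
  · rw [Nat.card_congr quotEquiv, Nat.card_eq_fintype_card, Fintype.card_fin]
  · have h31 : goodA 31 = Finset.univ := by decide
    have hce : cubeEdges = mset (goodA 31) := by rw [cube_eq, mset, h31]
    rw [hce]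
    exact (good_iff _).2 ⟨31, rfl⟩
end
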